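/- arXiv:0907.0292 — 4 statements merged into one kernel-verified Lean document; each statement's English description precedes it below -/
import Mathlib

section
/- Let T > 0 and x ∈ ℝ. Then the series identity ∑_{n=0}^∞ (x^{2n}/(n+1)!) ∫_{[0,T]^{n+1}} ( ∑_{i=1}^{n+1} e^{−x² t_i/2} ∏_{j≠i} 𝟙_{[0,t_i]}(t_j) )² dt_1 ⋯ dt_{n+1} = T holds. (This is the chaos-expansion computation showing that the Fourier transform ξ̂(x) of the Brownian stochastic current ξ(x) = ∫_0^T δ(x−B_s) dB_s satisfies E|ξ̂(x)|² = T for every x ∈ ℝ.) -/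
/-!
Off the null set of points with a repeated coordinate, at most one of the products
`∏_{j ≠ i} 𝟙_{[0,t_i]}(t_j)` is nonzero (the one at the largest coordinate), so the square of the
sum is the sum of the squares. Integrating out the other `n` coordinates, each of the `n + 1`
squares contributes `∫_0^T e^{-x² s} s^n ds`, so the `n`-th term of the series is
`(x²)^n / n! ∫_0^T e^{-x² s} s^n ds`. Summing under the integral (dominated convergence) gives
`∫_0^T e^{-x² s} e^{x² s} ds = T`.
-/

open MeasureTheory Real
open scoped ENNReal Nat

section MaxIndicator

variable {ι : Type*} [Fintype ι] [DecidableEq ι]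

noncomputable def maxIndicator (t : ι → ℝ) (i : ι) : ℝ :=
  ∏ j ∈ Finset.univ.erase i, (Set.Icc 0 (t i)).indicator 1 (t j)

theorem maxIndicator_eq_indicator (t : ι → ℝ) (i : ι) :
    maxIndicator t i = {t : ι → ℝ | ∀ j ≠ i, t j ∈ Set.Icc 0 (t i)}.indicator 1 t := by
  simp only [Set.indicator_apply, Set.mem_ofPred_eq, Pi.one_apply]
  split_ifs with h
  · exact Finset.prod_eq_one fun j hj => Set.indicator_of_mem (h j (Finset.ne_of_mem_erase hj)) 1
  · push Not at h
    obtain ⟨j, hji, hj⟩ := h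
    exact Finset.prod_eq_zero (Finset.mem_erase.2 ⟨hji, Finset.mem_univ j⟩)
      (Set.indicator_of_notMem hj 1)

theorem maxIndicator_nonneg (t : ι → ℝ) (i : ι) : 0 ≤ maxIndicator t i := by
  rw [maxIndicator_eq_indicator]
  exact Set.indicator_nonneg (fun _ _ => zero_le_one) t

theorem maxIndicator_mul_self (t : ι → ℝ) (i : ι) :
    maxIndicator t i * maxIndicator t i = maxIndicator t i := by
  rw [maxIndicator_eq_indicator, Set.indicator_apply]
  split_ifs <;> simp

theorem maxIndicator_mul_eq_zero {t : ι → ℝ} (ht : Function.Injective t) {i j : ι} (hij : i ≠ j) :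
    maxIndicator t i * maxIndicator t j = 0 := by
  simp only [maxIndicator_eq_indicator, Set.indicator_apply, Set.mem_ofPred_eq, Pi.one_apply]
  split_ifs with hi hj
  · exact absurd (ht (le_antisymm (hj i hij).2 (hi j hij.symm).2)) hij
  all_goals simp

@[fun_prop]
theorem measurable_maxIndicator (i : ι) : Measurable fun t : ι → ℝ => maxIndicator t i := by
  simp_rw [maxIndicator_eq_indicator]
  refine measurable_one.indicator ?_
  simp only [Set.mem_Icc, Set.ofPred_forall]
  exact MeasurableSet.iInter fun j => MeasurableSet.iInter fun _ =>
    (measurableSet_le measurable_const (measurable_pi_apply j)).inter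
      (measurableSet_le (measurable_pi_apply j) (measurable_pi_apply i))

theorem sq_sum_mul_maxIndicator (g : ℝ → ℝ) {t : ι → ℝ} (ht : Function.Injective t) :
    (∑ i, g (t i) * maxIndicator t i) ^ 2 = ∑ i, g (t i) ^ 2 * maxIndicator t i := by
  rw [sq, Finset.sum_mul_sum]
  refine Finset.sum_congr rfl fun i _ => ?_
  rw [Finset.sum_eq_single i]
  · rw [mul_mul_mul_comm, maxIndicator_mul_self, sq]
  · intro j _ hji
    rw [mul_mul_mul_comm, maxIndicator_mul_eq_zero ht hji.symm, mul_zero]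
  · exact fun h => absurd (Finset.mem_univ i) h

end MaxIndicator

theorem maxIndicator_insertNth {n : ℕ} (i : Fin (n + 1)) (s : ℝ) (u : Fin n → ℝ) :
    maxIndicator (Fin.insertNth i s u) i = (Set.univ.pi fun _ => Set.Icc 0 s).indicator 1 u := by
  rw [maxIndicator_eq_indicator]
  simp only [Set.indicator_apply, Set.mem_ofPred_eq, Fin.insertNth_apply_same]
  congr 1
  refine propext ⟨fun h k => ?_, fun h j hj => ?_⟩
  · simpa using h (i.succAbove k) (Fin.succAbove_ne i k)
  · obtain ⟨k, rfl⟩ := Fin.exists_succAbove_eq hj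
    simpa using h k

theorem volume_setOf_apply_eq_apply {ι : Type*} [Fintype ι] {i j : ι} (hij : i ≠ j) :
    volume {t : ι → ℝ | t i = t j} = 0 := by
  classical
  let L : (ι → ℝ) →ₗ[ℝ] ℝ := (LinearMap.proj i : (ι → ℝ) →ₗ[ℝ] ℝ) - LinearMap.proj j
  have hker : {t : ι → ℝ | t i = t j} = LinearMap.ker L := by
    ext t; simp [L, sub_eq_zero]
  rw [hker]
  refine Measure.addHaar_submodule _ _ fun h => ?_
  have : Pi.single i 1 ∈ LinearMap.ker L := h ▸ Submodule.mem_top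
  simp [L, Pi.single_eq_of_ne hij.symm] at this

theorem ae_injective_volume_pi (ι : Type*) [Fintype ι] :
    ∀ᵐ t : ι → ℝ, Function.Injective t := by
  have hsub : {t : ι → ℝ | ¬ Function.Injective t} ⊆ ⋃ (i) (j) (_ : i ≠ j), {t | t i = t j} := by
    intro t ht
    simp only [Function.Injective, not_forall] at ht
    obtain ⟨i, j, hij, hne⟩ := ht
    simp only [Set.mem_iUnion]
    exact ⟨i, j, hne, hij⟩
  exact measure_mono_null hsub (measure_iUnion_null fun i => measure_iUnion_null fun j =>
    measure_iUnion_null fun hij => volume_setOf_apply_eq_apply hij)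

theorem lintegral_comp_mul_maxIndicator {n : ℕ} (μ : Measure ℝ) [SigmaFinite μ] {g : ℝ → ℝ≥0∞}
    (hg : Measurable g) (i : Fin (n + 1)) :
    ∫⁻ t, g (t i) * ENNReal.ofReal (maxIndicator t i) ∂Measure.pi (fun _ => μ)
      = ∫⁻ s, g s * μ (Set.Icc 0 s) ^ n ∂μ := by
  have hmeas : Measurable fun t : Fin (n + 1) → ℝ =>
      g (t i) * ENNReal.ofReal (maxIndicator t i) := by
    fun_prop
  let e := MeasurableEquiv.piFinSuccAbove (fun _ : Fin (n + 1) => ℝ) i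
  rw [← ((measurePreserving_piFinSuccAbove (fun _ => μ) i).symm e).lintegral_comp hmeas,
    lintegral_prod _ (by exact (hmeas.comp e.symm.measurable).aemeasurable)]
  refine lintegral_congr fun s => ?_
  set S := Set.univ.pi fun _ : Fin n => Set.Icc (0 : ℝ) s
  have hS : MeasurableSet S := MeasurableSet.univ_pi fun _ => measurableSet_Icc
  have hofReal : (fun u => ENNReal.ofReal (S.indicator 1 u)) = S.indicator 1 :=
    funext fun u => by by_cases hu : u ∈ S <;> simp [hu]
  simp only [e, MeasurableEquiv.piFinSuccAbove_symm_apply, Fin.insertNthEquiv, Equiv.coe_fn_mk,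
    Fin.insertNth_apply_same, maxIndicator_insertNth]
  rw [lintegral_const_mul _ (hofReal ▸ measurable_one.indicator hS), hofReal,
    lintegral_indicator_one hS, Measure.pi_pi, Finset.prod_const, Finset.card_univ,
    Fintype.card_fin]

theorem setIntegral_pi_Icc_sq_sum_mul_maxIndicator (T : ℝ) {g : ℝ → ℝ} (hg : Measurable g) (n : ℕ) :
    ∫ t : Fin (n + 1) → ℝ in Set.univ.pi (fun _ => Set.Icc 0 T),
        (∑ i, g (t i) * maxIndicator t i) ^ 2
      = (n + 1) * ∫ s in Set.Icc 0 T, g s ^ 2 * s ^ n := by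
  set μ := volume.restrict (Set.Icc (0 : ℝ) T)
  have hpi : volume.restrict (Set.univ.pi fun _ : Fin (n + 1) => Set.Icc (0 : ℝ) T)
      = Measure.pi fun _ => μ := by
    rw [volume_pi, Measure.restrict_pi_pi]
  have hg2 : Measurable fun s => ENNReal.ofReal (g s ^ 2) := (hg.pow_const 2).ennreal_ofReal
  have hsq : ∀ᵐ t ∂volume.restrict (Set.univ.pi fun _ : Fin (n + 1) => Set.Icc (0 : ℝ) T),
      ENNReal.ofReal ((∑ i, g (t i) * maxIndicator t i) ^ 2)
        = ∑ i, ENNReal.ofReal (g (t i) ^ 2) * ENNReal.ofReal (maxIndicator t i) := by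
    filter_upwards [ae_restrict_of_ae (ae_injective_volume_pi _)] with t ht
    rw [sq_sum_mul_maxIndicator g ht, ENNReal.ofReal_sum_of_nonneg fun i _ =>
      mul_nonneg (sq_nonneg _) (maxIndicator_nonneg t i)]
    simp_rw [ENNReal.ofReal_mul (sq_nonneg _)]
  have hμ : ∀ s ∈ Set.Icc 0 T, μ (Set.Icc 0 s) = ENNReal.ofReal s := fun s hs => by
    rw [Measure.restrict_apply measurableSet_Icc,
      Set.inter_eq_self_of_subset_left (Set.Icc_subset_Icc_right hs.2), volume_Icc, sub_zero]
  have hmeas : Measurable fun t : Fin (n + 1) → ℝ => (∑ i, g (t i) * maxIndicator t i) ^ 2 := by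
    fun_prop
  calc _ = (∑ i : Fin (n + 1), ∫⁻ t, ENNReal.ofReal (g (t i) ^ 2) *
          ENNReal.ofReal (maxIndicator t i) ∂Measure.pi fun _ => μ).toReal := by
        rw [integral_eq_lintegral_of_nonneg_ae (ae_of_all _ fun t => sq_nonneg _)
          hmeas.aestronglyMeasurable, lintegral_congr_ae hsq, hpi, lintegral_finsetSum _
          fun i _ => by fun_prop]
    _ = ((n + 1 : ℕ) * ∫⁻ s in Set.Icc 0 T, ENNReal.ofReal (g s ^ 2 * s ^ n)).toReal := by
        rw [Finset.sum_congr rfl fun i _ => lintegral_comp_mul_maxIndicator μ hg2 i,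
          Finset.sum_const, Finset.card_univ, Fintype.card_fin, nsmul_eq_mul]
        congr 2
        refine setLIntegral_congr_fun measurableSet_Icc fun s hs => ?_
        rw [hμ s hs, ENNReal.ofReal_mul (sq_nonneg _), ENNReal.ofReal_pow hs.1]
    _ = _ := by
        rw [ENNReal.toReal_mul, ENNReal.toReal_natCast, Nat.cast_succ,
          integral_eq_lintegral_of_nonneg_ae ((ae_restrict_mem measurableSet_Icc).mono fun s hs =>
            mul_nonneg (sq_nonneg _) (pow_nonneg hs.1 n)) (by fun_prop)]

theorem hasSum_pow_div_factorial_mul_exp_mul_pow (a s : ℝ) :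
    HasSum (fun n : ℕ => a ^ n / n ! * (exp (-(a * s)) * s ^ n)) 1 := by
  have h := (NormedSpace.expSeries_div_hasSum_exp (a * s)).mul_left (exp (-(a * s)))
  rw [← Real.exp_eq_exp_ℝ, ← exp_add, neg_add_cancel, exp_zero] at h
  refine h.congr_fun fun n => ?_
  rw [mul_pow]
  ring

theorem hasSum_pow_div_factorial_mul_integral_exp_mul_pow {a T : ℝ} (ha : 0 ≤ a) (hT : 0 ≤ T) :
    HasSum (fun n : ℕ => a ^ n / n ! * ∫ s in Set.Icc 0 T, exp (-(a * s)) * s ^ n) T := by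
  set F : ℕ → ℝ → ℝ := fun n s => a ^ n / n ! * (exp (-(a * s)) * s ^ n)
  have hF := hasSum_pow_div_factorial_mul_exp_mul_pow a
  have hsum := hasSum_integral_of_dominated_convergence (μ := volume.restrict (Set.Icc 0 T)) F
    (fun n => by fun_prop)
    (fun n => (ae_restrict_mem measurableSet_Icc).mono fun s hs =>
      (Real.norm_of_nonneg (by have := hs.1; positivity)).le)
    (ae_of_all _ fun s => (hF s).summable)
    ((integrable_const 1).congr (ae_of_all _ fun s => (hF s).tsum_eq.symm))
    (ae_of_all _ hF)
  simpa [F, integral_const_mul, hT] using hsum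

/-- For `T > 0` and `x ∈ ℝ`,
`∑_{n=0}^∞ (x^{2n}/(n+1)!) ∫_{[0,T]^{n+1}}
  ( ∑_{i=1}^{n+1} e^{−x² t_i/2} ∏_{j≠i} 𝟙_{[0,t_i]}(t_j) )² dt = T`. -/
theorem brownian_current_fourier_L2_norm (T : ℝ) (hT : 0 < T) (x : ℝ) :
    ∑' n : ℕ, (x ^ (2 * n) / (n + 1).factorial) *
      ∫ t : Fin (n + 1) → ℝ in Set.univ.pi (fun _ => Set.Icc (0 : ℝ) T),
        (∑ i : Fin (n + 1), Real.exp (-(x ^ 2 * t i) / 2) *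
          ∏ j ∈ Finset.univ.erase i, Set.indicator (Set.Icc (0 : ℝ) (t i)) 1 (t j)) ^ 2
    = T := by
  have hexp : ∀ s, exp (-(x ^ 2 * s) / 2) ^ 2 = exp (-(x ^ 2 * s)) := fun s => by
    rw [← exp_nat_mul]; ring_nf
  calc _ = ∑' n : ℕ, x ^ (2 * n) / (n + 1)! *
        ((n + 1) * ∫ s in Set.Icc 0 T, exp (-(x ^ 2 * s) / 2) ^ 2 * s ^ n) :=
      tsum_congr fun n => congrArg _ (setIntegral_pi_Icc_sq_sum_mul_maxIndicator T (by fun_prop) n)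
    _ = ∑' n : ℕ, (x ^ 2) ^ n / n ! * ∫ s in Set.Icc 0 T, exp (-(x ^ 2 * s)) * s ^ n := by
      refine tsum_congr fun n => ?_
      simp_rw [hexp, Nat.factorial_succ, Nat.cast_mul, Nat.cast_succ, pow_mul]
      field_simp
    _ = T := (hasSum_pow_div_factorial_mul_integral_exp_mul_pow (sq_nonneg x) hT.le).tsum_eq
end

section
/- Let 0 < a < T, x ∈ ℝ and α < −1/2. Then the series ∑_{n=0}^∞ (n+2)^α · n! · ∫_a^T ( p_s(x) H_n(x/√s) )² ds converges (is finite). (This is the computation showing that the Brownian current ξ(x) = ∫_a^T δ(x−B_s) dB_s belongs to the Sobolev–Watanabe space 𝔻^{−α,2} for every α > 1/2.) -/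
open MeasureTheory Real

/-- The centered Gaussian density of variance `s`: `p_s(x) = (2πs)^{-1/2} exp(−x²/(2s))`. -/
noncomputable def gaussianKernel (s x : ℝ) : ℝ :=
  (Real.sqrt (2 * Real.pi * s))⁻¹ * Real.exp (-x ^ 2 / (2 * s))

/-- The normalized Hermite polynomial
`H_n(x) = ((−1)^n/n!) e^{x²/2} (d^n/dx^n) e^{−x²/2}`. -/
noncomputable def hermiteH (n : ℕ) (x : ℝ) : ℝ :=
  ((-1) ^ n / n.factorial) * Real.exp (x ^ 2 / 2) *
    iteratedDeriv n (fun y => Real.exp (-y ^ 2 / 2)) x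
/-!
Since `p_s(x) e^{x²/(2s)} = (2πs)^{-1/2}`, the `n`-th summand is `(n+2)^α / n!` times
`∫_a^T (2πs)⁻¹ g⁽ⁿ⁾(x/√s)² ds`, where `g(y) = e^{-y²/2}`. As `g` is the characteristic function of
a standard Gaussian `N`, `|g⁽ⁿ⁾| ≤ E|N|ⁿ`, and `(E|N|ⁿ)² = 2ⁿ Γ((n+1)/2)² / π` grows by the factor
`(n+1)²` from `n` to `n+2`. Since `(n+1)(n+3) ≤ (n+2)²`, this gives `(E|N|ⁿ)² ≤ n! / √(n+1)`,
so the summand is `O((n+1)^(α-1/2))`, which is summable for `α < -1/2`.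
-/

open ProbabilityTheory Set
open scoped Nat Interval

lemma norm_iteratedDeriv_charFun_le {μ : Measure ℝ} [IsFiniteMeasure μ] {n : ℕ}
    (hint : MemLp id n μ) (t : ℝ) :
    ‖iteratedDeriv n (charFun μ) t‖ ≤ ∫ x, |x| ^ n ∂μ := by
  rw [iteratedDeriv_charFun hint, norm_mul, norm_pow, Complex.norm_I, one_pow, one_mul]
  refine (norm_integral_le_integral_norm _).trans_eq (integral_congr_ae (ae_of_all _ fun x => ?_))
  simp [← Complex.ofReal_mul, Complex.norm_exp_ofReal_mul_I]

lemma exp_neg_sq_div_two_eq_re_charFun :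
    (fun y : ℝ => exp (-y ^ 2 / 2)) = Complex.reCLM ∘ charFun (gaussianReal 0 1) := by
  funext y
  simp [charFun_gaussianReal, Complex.exp_re, ← Complex.ofReal_pow, neg_div]

lemma abs_iteratedDeriv_exp_neg_sq_div_two_le (n : ℕ) (y : ℝ) :
    |iteratedDeriv n (fun y : ℝ => exp (-y ^ 2 / 2)) y| ≤ ∫ x, |x| ^ n ∂gaussianReal 0 1 := by
  have hint : MemLp id n (gaussianReal 0 1) := memLp_id_gaussianReal n
  rw [exp_neg_sq_div_two_eq_re_charFun, iteratedDeriv_eq_iteratedFDeriv,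
    Complex.reCLM.iteratedFDeriv_comp_left (contDiff_charFun hint).contDiffAt le_rfl]
  calc _ ≤ ‖iteratedDeriv n (charFun (gaussianReal 0 1)) y‖ := by
        rw [iteratedDeriv_eq_iteratedFDeriv]; exact Complex.abs_re_le_norm _
    _ ≤ _ := norm_iteratedDeriv_charFun_le hint y

lemma integral_abs_pow_mul_exp_neg_mul_sq {b : ℝ} (hb : 0 < b) (n : ℕ) :
    ∫ x, |x| ^ n * exp (-b * x ^ 2) = b ^ (-((n : ℝ) + 1) / 2) * Gamma (((n : ℝ) + 1) / 2) := by
  have half_line :=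
    integral_rpow_mul_exp_neg_mul_rpow two_pos (neg_one_lt_zero.trans_le n.cast_nonneg) hb
  simp only [rpow_natCast, rpow_two] at half_line
  calc ∫ x, |x| ^ n * exp (-b * x ^ 2) = ∫ x, |x| ^ n * exp (-b * |x| ^ 2) := by
        simp only [sq_abs]
    _ = 2 * ∫ x in Ioi 0, x ^ n * exp (-b * x ^ 2) :=
        integral_comp_abs (f := fun x => x ^ n * exp (-b * x ^ 2))
    _ = _ := by rw [half_line]; ring

lemma sq_integral_abs_pow_gaussianReal (n : ℕ) :
    (∫ x, |x| ^ n ∂gaussianReal 0 1) ^ 2 = 2 ^ n * Gamma (((n : ℝ) + 1) / 2) ^ 2 / π := by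
  rw [integral_gaussianReal_eq_integral_smul one_ne_zero]
  have hpdf : ∀ x, gaussianPDFReal 0 1 x • |x| ^ n
      = (√(2 * π))⁻¹ * (|x| ^ n * exp (-(1 / 2) * x ^ 2)) := fun x => by
    simp only [gaussianPDFReal, smul_eq_mul, NNReal.coe_one, mul_one, sub_zero]
    ring_nf
  have hpow : ((1 / 2 : ℝ) ^ (-((n : ℝ) + 1) / 2)) ^ 2 = 2 ^ (n + 1) := by
    rw [← rpow_natCast, ← rpow_mul (by norm_num), one_div, inv_rpow (by norm_num),
      ← rpow_neg (by norm_num),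
      show -(-((n : ℝ) + 1) / 2 * (2 : ℕ)) = (n + 1 : ℕ) by push_cast; ring, rpow_natCast]
  simp_rw [hpdf]
  rw [integral_const_mul, integral_abs_pow_mul_exp_neg_mul_sq (by norm_num), mul_pow, mul_pow,
    inv_pow, sq_sqrt (by positivity), hpow]
  field_simp
  ring

lemma sq_le_factorial_div_sqrt_of_recurrence {g : ℕ → ℝ} (h0 : g 0 ≤ 1) (h1 : g 1 ≤ 1 / √2)
    (hrec : ∀ n, g (n + 2) = (n + 1) ^ 2 * g n) (n : ℕ) : g n ≤ n ! / √(n + 1) := by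
  induction n using Nat.twoStepInduction with
  | zero => simpa using h0
  | one => simpa [one_add_one_eq_two] using h1
  | more n ih _ =>
    have hsqrt : √((n : ℝ) + 1) * √(n + 3) ≤ n + 2 := by
      rw [← sqrt_mul (by positivity)]
      exact sqrt_le_iff.mpr ⟨by positivity, by nlinarith⟩
    rw [hrec, Nat.factorial_succ, Nat.factorial_succ]
    push_cast
    rw [show (n : ℝ) + 2 + 1 = n + 3 by ring, le_div_iff₀ (by positivity)]
    calc ((n : ℝ) + 1) ^ 2 * g n * √(n + 3) ≤ (n + 1) ^ 2 * (n ! / √(n + 1)) * √(n + 3) := by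
          gcongr
      _ = (n + 1) * n ! * (√(n + 1) * √(n + 3)) := by
          field_simp
          rw [sq_sqrt (by positivity)]
      _ ≤ (n + 1) * n ! * (n + 2) := by gcongr
      _ = _ := by ring

lemma sq_integral_abs_pow_gaussianReal_le (n : ℕ) :
    (∫ x, |x| ^ n ∂gaussianReal 0 1) ^ 2 ≤ n ! / √(n + 1) := by
  refine sq_le_factorial_div_sqrt_of_recurrence (g := fun n => (∫ x, |x| ^ n ∂gaussianReal 0 1) ^ 2)
    ?_ ?_ (fun n => ?_) n <;> simp only [sq_integral_abs_pow_gaussianReal]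
  · norm_num [Gamma_one_half_eq, sq_sqrt pi_pos.le, pi_ne_zero]
  · have hsqrt2 : √2 * 2 ≤ 3 := by nlinarith [sq_sqrt (zero_le_two : (0 : ℝ) ≤ 2), sqrt_nonneg 2]
    rw [div_le_div_iff₀ pi_pos (by positivity)]
    norm_num
    nlinarith [pi_gt_three]
  · have hG : Gamma ((((n + 2 : ℕ) : ℝ) + 1) / 2)
        = ((n : ℝ) + 1) / 2 * Gamma (((n : ℝ) + 1) / 2) := by
      rw [← Gamma_add_one (by positivity)]
      push_cast
      ring_nf
    rw [hG]
    ring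

lemma gaussianKernel_mul_hermiteH {s : ℝ} (hs : 0 < s) (x : ℝ) (n : ℕ) :
    gaussianKernel s x * hermiteH n (x / √s)
      = (-1) ^ n / n ! * (√(2 * π * s))⁻¹ *
          iteratedDeriv n (fun y => exp (-y ^ 2 / 2)) (x / √s) := by
  have hcancel : exp (-x ^ 2 / (2 * s)) * exp ((x / √s) ^ 2 / 2) = 1 := by
    rw [← exp_add, div_pow, sq_sqrt hs.le, neg_div, ← div_div, div_right_comm, neg_add_cancel,
      exp_zero]
  rw [gaussianKernel, hermiteH]
  linear_combination ((-1) ^ n / n ! * (√(2 * π * s))⁻¹ *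
    iteratedDeriv n (fun y => exp (-y ^ 2 / 2)) (x / √s)) * hcancel

lemma sq_gaussianKernel_mul_hermiteH_le {s : ℝ} (hs : 0 < s) (x : ℝ) (n : ℕ) :
    (gaussianKernel s x * hermiteH n (x / √s)) ^ 2 ≤ 1 / (2 * π * s * n ! * √(n + 1)) := by
  have hderiv : iteratedDeriv n (fun y => exp (-y ^ 2 / 2)) (x / √s) ^ 2 ≤ n ! / √(n + 1) :=
    sq_abs (iteratedDeriv n (fun y => exp (-y ^ 2 / 2)) (x / √s)) ▸
      (pow_le_pow_left₀ (abs_nonneg _) (abs_iteratedDeriv_exp_neg_sq_div_two_le n _) 2).trans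
        (sq_integral_abs_pow_gaussianReal_le n)
  rw [gaussianKernel_mul_hermiteH hs, mul_pow, mul_pow, div_pow, inv_pow,
    sq_sqrt (by positivity), ← pow_mul, mul_comm n, pow_mul, neg_one_sq, one_pow]
  calc 1 / (n ! : ℝ) ^ 2 * (2 * π * s)⁻¹ * iteratedDeriv n (fun y => exp (-y ^ 2 / 2)) (x / √s) ^ 2
      ≤ 1 / (n ! : ℝ) ^ 2 * (2 * π * s)⁻¹ * (n ! / √(n + 1)) := by gcongr
    _ = _ := by field_simp

lemma norm_integral_sq_gaussianKernel_mul_hermiteH_le {a T : ℝ} (ha : 0 < a) (haT : a ≤ T)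
    (x : ℝ) (n : ℕ) :
    ‖∫ s in a..T, (gaussianKernel s x * hermiteH n (x / √s)) ^ 2‖
      ≤ (T - a) / (2 * π * a * n ! * √(n + 1)) := by
  have hbound : ∀ s ∈ Ι a T, ‖(gaussianKernel s x * hermiteH n (x / √s)) ^ 2‖
      ≤ 1 / (2 * π * a * n ! * √(n + 1)) := by
    intro s hs
    rw [uIoc_of_le haT] at hs
    have has : a ≤ s := hs.1.le
    rw [Real.norm_of_nonneg (sq_nonneg _)]
    refine (sq_gaussianKernel_mul_hermiteH_le (ha.trans_le has) x n).trans ?_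
    gcongr
  refine (intervalIntegral.norm_integral_le_of_norm_le_const hbound).trans_eq ?_
  rw [abs_of_nonneg (sub_nonneg.mpr haT)]
  ring

/-- for `0 < a < T`, `x ∈ ℝ` and `α < −1/2`, the series
`∑_{n=0}^∞ (n+2)^α n! ∫_a^T (p_s(x) H_n(x/√s))² ds` converges. -/
theorem brownian_current_watanabe_norm_summable
    (a T x α : ℝ) (ha : 0 < a) (haT : a < T) (hα : α < -(1 / 2)) :
    Summable (fun n : ℕ => ((n : ℝ) + 2) ^ α * (n.factorial : ℝ) *
      ∫ s in a..T, (gaussianKernel s x * hermiteH n (x / Real.sqrt s)) ^ 2) := by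
  set C := (T - a) / (2 * π * a)
  have hpow : Summable (fun n : ℕ => ((n : ℝ) + 1) ^ (α - 1 / 2)) := by
    simpa using (summable_nat_add_iff 1).mpr (summable_nat_rpow.mpr (by linarith))
  refine (hpow.mul_left C).of_norm_bounded (fun n => ?_)
  have hn : (0 : ℝ) < n + 1 := by positivity
  have hdecay : ((n : ℝ) + 2) ^ α / √(n + 1) ≤ ((n : ℝ) + 1) ^ (α - 1 / 2) := by
    rw [sqrt_eq_rpow, rpow_sub hn, div_le_div_iff_of_pos_right (by positivity)]
    exact rpow_le_rpow_of_nonpos hn (by linarith) (by linarith)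
  calc ‖((n : ℝ) + 2) ^ α * n ! * ∫ s in a..T, (gaussianKernel s x * hermiteH n (x / √s)) ^ 2‖
      ≤ ((n : ℝ) + 2) ^ α * n ! * ((T - a) / (2 * π * a * n ! * √(n + 1))) := by
        rw [norm_mul, norm_of_nonneg (by positivity)]
        gcongr
        exact norm_integral_sq_gaussianKernel_mul_hermiteH_le ha haT.le x n
    _ = C * (((n : ℝ) + 2) ^ α / √(n + 1)) := by
        simp only [C]
        field_simp
    _ ≤ C * ((n : ℝ) + 1) ^ (α - 1 / 2) := by
        gcongr
end

section
/- Let H ∈ (1/2,1), T > 0 and r > 1/(2H) − 1/2. Then ∫_ℝ ∫_0^T ∫_0^T (1+x²)^{−r} e^{−x²|u−v|^{2H}/2} |u−v|^{2H−2} du dv dx < ∞. (This is the finiteness of the diagonal term A in the proof that the fractional Brownian current x ↦ ∫_0^T δ(x−B^H_s) dB^H_s belongs to H^{−r}(ℝ;ℝ).) -/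
/-!
Since `exp (-t) ≤ t ^ (-ε)` for `t > 0` and `0 ≤ ε ≤ 1`, the integrand is at most
`2 ^ ε (1 + x²) ^ (-r) (x²) ^ (-ε) · |u - v| ^ (2H - 2 - 2Hε)`, which separates the variables.
The `x`-factor is integrable when `ε < 1/2 < r + ε`, the `(u, v)`-factor when
`2H - 2 - 2Hε > -1`; the hypothesis `r > 1/(2H) - 1/2` is exactly what leaves room for an `ε`
in `(max (1/2 - r) 0, 1 - 1/(2H))`.
-/

open MeasureTheory Real Set
open scoped ENNReal

theorem Real.exp_neg_le_rpow_neg {t e : ℝ} (ht : 0 < t) (he₀ : 0 ≤ e) (he₁ : e ≤ 1) :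
    exp (-t) ≤ t ^ (-e) := by
  rcases le_or_gt t 1 with ht₁ | ht₁
  · calc exp (-t) ≤ 1 := exp_le_one_iff.2 (by linarith)
      _ ≤ t ^ (-e) := one_le_rpow_of_pos_of_le_one_of_nonpos ht ht₁ (by linarith)
  · calc exp (-t) = (exp t)⁻¹ := exp_neg t
      _ ≤ t⁻¹ := inv_anti₀ ht (by linarith [add_one_le_exp t])
      _ = t ^ (-1 : ℝ) := (rpow_neg_one t).symm
      _ ≤ t ^ (-e) := rpow_le_rpow_of_exponent_le ht₁.le (by linarith)

theorem Real.sq_rpow {x : ℝ} (hx : 0 ≤ x) (c : ℝ) : (x ^ 2) ^ c = x ^ (2 * c) := by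
  rw [rpow_mul hx, rpow_two]

theorem lintegral_comp_abs (f : ℝ → ℝ≥0∞) : ∫⁻ x, f |x| = 2 * ∫⁻ x in Ioi 0, f x := by
  have hpos : ∫⁻ x in Ioi 0, f |x| = ∫⁻ x in Ioi 0, f x :=
    setLIntegral_congr_fun measurableSet_Ioi fun x hx => by rw [abs_of_pos hx]
  have hneg : ∫⁻ x in Iic 0, f |x| = ∫⁻ x in Ioi 0, f |x| := by
    rw [← lintegral_indicator measurableSet_Iic, ← lintegral_neg_eq_self,
      setLIntegral_congr Ioi_ae_eq_Ici, ← lintegral_indicator measurableSet_Ici]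
    congr! 2 with x
    simp [Set.indicator_apply]
  rw [← lintegral_add_compl _ measurableSet_Ioi, compl_Ioi, hneg, hpos, two_mul]

theorem setLIntegral_setLIntegral_sub_le {G : Type*} [MeasurableSpace G] [AddGroup G]
    [MeasurableAdd G] [MeasurableNeg G] (μ : Measure G) [μ.IsAddLeftInvariant]
    [μ.IsNegInvariant] (f : G → ℝ≥0∞) (s t : Set G) :
    ∫⁻ u in s, ∫⁻ v in t, f (u - v) ∂μ ∂μ ≤ μ s * ∫⁻ w, f w ∂μ := by
  calc ∫⁻ u in s, ∫⁻ v in t, f (u - v) ∂μ ∂μ ≤ ∫⁻ _ in s, ∫⁻ w, f w ∂μ ∂μ :=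
        lintegral_mono fun u => (setLIntegral_le_lintegral t _).trans
          (lintegral_sub_left_eq_self f u).le
    _ = μ s * ∫⁻ w, f w ∂μ := by rw [setLIntegral_const, mul_comm]

theorem lintegral_Icc_lintegral_Icc_abs_sub_rpow_lt_top {q : ℝ} (hq : -1 < q) (a b : ℝ) :
    ∫⁻ u in Icc a b, ∫⁻ v in Icc a b, ENNReal.ofReal (|u - v| ^ q) < ⊤ := by
  -- on the square `|u - v| ≤ b - a`, so the integrand is `F (u - v)` with `F` integrable on `ℝ`
  set F : ℝ → ℝ≥0∞ := fun w => (Iic (b - a)).indicator (fun y => ENNReal.ofReal (y ^ q)) |w|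
  have hF : ∫⁻ w, F w < ⊤ := by
    rw [lintegral_comp_abs, lintegral_indicator measurableSet_Iic,
      Measure.restrict_restrict measurableSet_Iic, Iic_inter_Ioi]
    exact ENNReal.mul_lt_top (by simp)
      (intervalIntegral.intervalIntegrable_rpow' hq (a := 0) (b := b - a)).1.lintegral_lt_top
  calc ∫⁻ u in Icc a b, ∫⁻ v in Icc a b, ENNReal.ofReal (|u - v| ^ q)
      = ∫⁻ u in Icc a b, ∫⁻ v in Icc a b, F (u - v) := by
        refine setLIntegral_congr_fun measurableSet_Icc fun u hu =>
          setLIntegral_congr_fun measurableSet_Icc fun v hv => ?_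
        have : |u - v| ≤ b - a := abs_sub_le_of_le_of_le hu.1 hu.2 hv.1 hv.2
        simp [F, this]
    _ ≤ volume (Icc a b) * ∫⁻ w, F w := setLIntegral_setLIntegral_sub_le _ _ _ _
    _ < ⊤ := ENNReal.mul_lt_top (by simp) hF

theorem lintegral_one_add_sq_rpow_neg_mul_sq_rpow_neg_lt_top {r b : ℝ} (hb : b < 1 / 2)
    (hrb : 1 / 2 < r + b) :
    ∫⁻ x, ENNReal.ofReal ((1 + x ^ 2) ^ (-r) * (x ^ 2) ^ (-b)) < ⊤ := by
  set φ : ℝ → ℝ≥0∞ := fun y => ENNReal.ofReal ((1 + y ^ 2) ^ (-r) * (y ^ 2) ^ (-b))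
  have hnear : ∀ y ∈ Ioc (0 : ℝ) 1, φ y ≤ ENNReal.ofReal (y ^ (2 * -b)) := fun y hy => by
    refine ENNReal.ofReal_le_ofReal ?_
    rw [← sq_rpow hy.1.le]
    exact mul_le_of_le_one_left (by positivity)
      (rpow_le_one_of_one_le_of_nonpos (by nlinarith) (by linarith))
  have hfar : ∀ y ∈ Ioi (1 : ℝ), φ y ≤ ENNReal.ofReal (y ^ (2 * -(r + b))) := fun y hy => by
    have hy₀ : 0 < y := one_pos.trans hy
    refine ENNReal.ofReal_le_ofReal ?_
    calc (1 + y ^ 2) ^ (-r) * (y ^ 2) ^ (-b) ≤ (y ^ 2) ^ (-r) * (y ^ 2) ^ (-b) :=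
          mul_le_mul_of_nonneg_right
            (rpow_le_rpow_of_nonpos (by positivity) (by linarith) (by linarith)) (by positivity)
      _ = y ^ (2 * -(r + b)) := by
          rw [← rpow_add (by positivity), sq_rpow hy₀.le, neg_add]
  rw [show (∫⁻ x, φ x) = ∫⁻ x, φ |x| by simp only [φ, sq_abs], lintegral_comp_abs,
    ← Ioc_union_Ioi_eq_Ioi zero_le_one, lintegral_union measurableSet_Ioi (Ioc_disjoint_Ioi le_rfl)]
  refine ENNReal.mul_lt_top (by simp) (ENNReal.add_lt_top.2 ⟨?_, ?_⟩)
  · exact (setLIntegral_mono' measurableSet_Ioc hnear).trans_lt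
      (intervalIntegral.intervalIntegrable_rpow' (by linarith) (a := 0) (b := 1)).1.lintegral_lt_top
  · exact (setLIntegral_mono' measurableSet_Ioi hfar).trans_lt
      (integrableOn_Ioi_rpow_of_lt (by linarith) one_pos).lintegral_lt_top

/-- The integrand of the diagonal term, as a function of `x` and `s = |u - v|`. -/
noncomputable def diagonalKernel (H r x s : ℝ) : ℝ :=
  (1 + x ^ 2) ^ (-r) * exp (-(x ^ 2 * s ^ (2 * H)) / 2) * s ^ (2 * H - 2)

section diagonalKernel

variable {H r ε : ℝ}

theorem diagonalKernel_le {x s : ℝ} (hx : x ≠ 0) (hs : 0 ≤ s) (hH : H ≠ 1) (hε₀ : 0 ≤ ε)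
    (hε₁ : ε ≤ 1) :
    diagonalKernel H r x s
      ≤ 2 ^ ε * ((1 + x ^ 2) ^ (-r) * (x ^ 2) ^ (-ε)) * s ^ (2 * H - 2 - 2 * H * ε) := by
  unfold diagonalKernel
  rcases hs.eq_or_lt with rfl | hs
  · rw [zero_rpow (x := 2 * H - 2) (by intro h; apply hH; linarith), mul_zero]
    positivity
  calc (1 + x ^ 2) ^ (-r) * exp (-(x ^ 2 * s ^ (2 * H)) / 2) * s ^ (2 * H - 2)
      ≤ (1 + x ^ 2) ^ (-r) * (x ^ 2 * s ^ (2 * H) / 2) ^ (-ε) * s ^ (2 * H - 2) := by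
        gcongr
        rw [neg_div]
        exact exp_neg_le_rpow_neg (by positivity) hε₀ hε₁
    _ = 2 ^ ε * ((1 + x ^ 2) ^ (-r) * (x ^ 2) ^ (-ε)) * s ^ (2 * H - 2 - 2 * H * ε) := by
        rw [div_rpow (by positivity) zero_le_two, mul_rpow (by positivity) (by positivity),
          ← rpow_mul hs.le, rpow_neg zero_le_two, div_inv_eq_mul,
          show 2 * H - 2 - 2 * H * ε = 2 * H * -ε + (2 * H - 2) by ring, rpow_add hs]
        ring

theorem lintegral_diagonalKernel_le (hH : H ≠ 1) (hε₀ : 0 ≤ ε) (hε₁ : ε ≤ 1) (s : Set ℝ) :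
    ∫⁻ x, ∫⁻ u in s, ∫⁻ v in s, ENNReal.ofReal (diagonalKernel H r x |u - v|)
      ≤ ENNReal.ofReal (2 ^ ε) * (∫⁻ x, ENNReal.ofReal ((1 + x ^ 2) ^ (-r) * (x ^ 2) ^ (-ε)))
        * ∫⁻ u in s, ∫⁻ v in s, ENNReal.ofReal (|u - v| ^ (2 * H - 2 - 2 * H * ε)) := by
  have hpos : (0 : ℝ) ≤ 2 ^ ε := by positivity
  calc _ ≤ ∫⁻ x, ∫⁻ u in s, ∫⁻ v in s,
        ENNReal.ofReal (2 ^ ε * ((1 + x ^ 2) ^ (-r) * (x ^ 2) ^ (-ε)))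
          * ENNReal.ofReal (|u - v| ^ (2 * H - 2 - 2 * H * ε)) := by
        refine lintegral_mono_ae <| (Measure.ae_ne volume 0).mono fun x hx =>
          lintegral_mono fun u => lintegral_mono fun v => ?_
        rw [← ENNReal.ofReal_mul (by positivity)]
        exact ENNReal.ofReal_le_ofReal (diagonalKernel_le hx (abs_nonneg _) hH hε₀ hε₁)
    _ = _ := by
        simp only [lintegral_const_mul' _ _ ENNReal.ofReal_ne_top]
        rw [lintegral_mul_const _ (by fun_prop)]
        simp only [ENNReal.ofReal_mul hpos, lintegral_const_mul' _ _ ENNReal.ofReal_ne_top]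

end diagonalKernel

theorem fbm_current_sobolev_diagonal_term_finite_general
    (H T r : ℝ) (hH : 1 / 2 < H) (hH1 : H < 1)
    (hr : 1 / (2 * H) - 1 / 2 < r) :
    ∫⁻ x : ℝ, ∫⁻ u in Set.Icc (0 : ℝ) T, ∫⁻ v in Set.Icc (0 : ℝ) T,
      ENNReal.ofReal ((1 + x ^ 2) ^ (-r) *
        Real.exp (-(x ^ 2 * |u - v| ^ (2 * H)) / 2) * |u - v| ^ (2 * H - 2))
    < ⊤ := by
  obtain ⟨ε, hε_lo, hε_hi⟩ : ∃ ε, max (1 / 2 - r) 0 < ε ∧ ε < 1 - 1 / (2 * H) :=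
    exists_between (max_lt (by linarith) (sub_pos.2 ((div_lt_one (by linarith)).2 (by linarith))))
  obtain ⟨hrε, hε₀⟩ := max_lt_iff.1 hε_lo
  have hε_half : ε < 1 / 2 := by
    linarith [one_div_lt_one_div_of_lt (by linarith : 0 < 2 * H) (by linarith : 2 * H < 2)]
  have hq : -1 < 2 * H - 2 - 2 * H * ε := by
    have := mul_lt_mul_of_pos_left hε_hi (by linarith : 0 < 2 * H)
    rw [mul_sub, mul_one, mul_one_div_cancel (by linarith)] at this
    linarith
  refine (lintegral_diagonalKernel_le hH1.ne hε₀.le (by linarith) (Icc 0 T)).trans_lt ?_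
  exact ENNReal.mul_lt_top (ENNReal.mul_lt_top ENNReal.ofReal_lt_top
    (lintegral_one_add_sq_rpow_neg_mul_sq_rpow_neg_lt_top hε_half (by linarith)))
    (lintegral_Icc_lintegral_Icc_abs_sub_rpow_lt_top hq 0 T)

/-- for `H ∈ (1/2,1)`, `T > 0` and `r > 1/(2H) − 1/2`,
`∫_ℝ ∫_0^T ∫_0^T (1+x²)^{−r} e^{−x²|u−v|^{2H}/2} |u−v|^{2H−2} du dv dx < ∞`. -/
theorem fbm_current_sobolev_diagonal_term_finite
    (H T r : ℝ) (hH : 1 / 2 < H) (hH1 : H < 1) (hT : 0 < T)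
    (hr : 1 / (2 * H) - 1 / 2 < r) :
    ∫⁻ x : ℝ, ∫⁻ u in Set.Icc (0 : ℝ) T, ∫⁻ v in Set.Icc (0 : ℝ) T,
      ENNReal.ofReal ((1 + x ^ 2) ^ (-r) *
        Real.exp (-(x ^ 2 * |u - v| ^ (2 * H)) / 2) * |u - v| ^ (2 * H - 2))
    < ⊤ :=
  fbm_current_sobolev_diagonal_term_finite_general H T r hH hH1 hr
end

section
/- Let H ∈ (1/2,1), T > 0 and r > 3/2 − 1/(2H). Then ∫_ℝ (1+x²)^{−r} x² ( ∫_0^T ∫_0^T ( ∫_0^{u_1} |u_2−v_2|^{2H−2} du_2 ) ( ∫_0^{v_2} |u_1−v_1|^{2H−2} dv_1 ) e^{−x²|u_1−v_2|^{2H}/2} du_1 dv_2 ) dx < ∞. (This is the finiteness of the off-diagonal term B arising in the chaos-norm computation for the fractional Brownian current in the space H^{−r}(ℝ;ℝ).) -/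
open MeasureTheory Real Set

/-!
The two inner kernels are bounded by `C = ∫_{-T}^{T} |w|^{2H-2} dw`. The Gaussian factor is traded
for a power through `e^{-y} ≤ p^p y^{-p}`, which gives
`(1+x²)^{-r} x² e^{-x² s/2} ≤ (2p)^p s^{-p} (1+x²)^{1-p-r}` with `s = |u₁-v₂|^{2H}`.
The integrand is then dominated by a product of a function of `x` and a function of `(u₁, v₂)`,
and any `p ∈ (3/2 - r, 1/(2H))` makes both factors integrable:
`(1+x²)^{1-p-r}` on `ℝ` because `2(r+p-1) > 1`, and `|u₁-v₂|^{-2Hp}` on `[0,T]²` because `2Hp < 1`.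
-/

lemma locallyIntegrable_abs_rpow {s : ℝ} (hs : -1 < s) :
    LocallyIntegrable (fun x : ℝ => |x| ^ s) := by
  refine locallyIntegrable_of_norm_le_rpow (α := -s) (C := 1) (by simp)
    (by rw [Module.finrank_self, Nat.cast_one]; linarith)
    (ae_of_all _ fun x => ?_)
    (continuous_abs.measurable.pow_const s).aestronglyMeasurable
  rw [Real.norm_eq_abs, abs_of_nonneg (rpow_nonneg (abs_nonneg x) s), one_mul, Real.norm_eq_abs,
    neg_neg]

lemma intervalIntegrable_abs_rpow {s : ℝ} (hs : -1 < s) (a b : ℝ) :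
    IntervalIntegrable (fun x : ℝ => |x| ^ s) volume a b :=
  ((locallyIntegrable_abs_rpow hs).integrableOn_isCompact isCompact_uIcc).intervalIntegrable

lemma intervalIntegral_abs_sub_rpow_le {s T u v : ℝ} (hs : -1 < s) (hu : u ∈ Icc 0 T)
    (hv : v ∈ Icc 0 T) :
    ∫ t in (0 : ℝ)..u, |t - v| ^ s ≤ ∫ w in -T..T, |w| ^ s := by
  rw [intervalIntegral.integral_comp_sub_right (fun w => |w| ^ s), zero_sub]
  exact intervalIntegral.integral_mono_interval (by linarith [hv.2]) (by linarith [hu.1])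
    (by linarith [hu.2, hv.1]) (ae_of_all _ fun w => rpow_nonneg (abs_nonneg w) s)
    (intervalIntegrable_abs_rpow hs _ _)

lemma setLIntegral_Icc_abs_sub_rpow_le {s T u : ℝ} (hs : -1 < s) (hu : u ∈ Icc 0 T) :
    ∫⁻ v in Icc 0 T, ENNReal.ofReal (|u - v| ^ s) ≤ ENNReal.ofReal (∫ w in -T..T, |w| ^ s) := by
  have hT : 0 ≤ T := hu.1.trans hu.2
  have hint : IntegrableOn (fun v => |u - v| ^ s) (Icc 0 T) := by
    rw [← intervalIntegrable_iff_integrableOn_Icc_of_le hT]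
    simpa using (intervalIntegrable_abs_rpow hs u (u - T)).comp_sub_left u
  rw [← ofReal_integral_eq_lintegral_ofReal hint
    (ae_of_all _ fun v => rpow_nonneg (abs_nonneg _) s), integral_Icc_eq_integral_Ioc,
    ← intervalIntegral.integral_of_le hT]
  simp_rw [abs_sub_comm u]
  exact ENNReal.ofReal_le_ofReal (intervalIntegral_abs_sub_rpow_le hs ⟨hT, le_rfl⟩ hu)

lemma setLIntegral_Icc_setLIntegral_Icc_abs_sub_rpow_lt_top {s : ℝ} (hs : -1 < s) (T : ℝ) :
    ∫⁻ u in Icc 0 T, ∫⁻ v in Icc 0 T, ENNReal.ofReal (|u - v| ^ s) < ⊤ :=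
  calc _ ≤ ∫⁻ _ in Icc 0 T, ENNReal.ofReal (∫ w in -T..T, |w| ^ s) :=
        setLIntegral_mono' measurableSet_Icc fun _ hu => setLIntegral_Icc_abs_sub_rpow_le hs hu
    _ < ⊤ := by
        rw [setLIntegral_const, Real.volume_Icc]
        exact ENNReal.mul_lt_top ENNReal.ofReal_lt_top ENNReal.ofReal_lt_top

lemma integrable_one_add_sq_rpow {a : ℝ} (ha : a < -1 / 2) :
    Integrable fun x : ℝ => (1 + x ^ 2) ^ a := by
  have h := integrable_rpow_neg_one_add_norm_sq (E := ℝ) (μ := volume) (r := -2 * a)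
    (by rw [Module.finrank_self, Nat.cast_one]; linarith)
  simpa [Real.norm_eq_abs, sq_abs, neg_mul, neg_neg, mul_div_cancel_left₀] using h

lemma exp_neg_le_rpow_mul_rpow_neg {p y : ℝ} (hp : 0 < p) (hy : 0 < y) :
    exp (-y) ≤ p ^ p * y ^ (-p) := by
  have hyp : 0 < y / p := div_pos hy hp
  have h : exp (-(y / p)) ≤ p / y := by
    simpa only [exp_neg, inv_div] using
      inv_anti₀ hyp ((le_add_of_nonneg_right zero_le_one).trans (add_one_le_exp (y / p)))
  calc exp (-y) = exp (-(y / p)) ^ p := by rw [← exp_mul]; field_simp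
    _ ≤ (p / y) ^ p := rpow_le_rpow (exp_pos _).le h hp.le
    _ = p ^ p * y ^ (-p) := by rw [div_rpow hp.le hy.le, rpow_neg hy.le, div_eq_mul_inv]

lemma one_add_sq_rpow_neg_mul_sq_mul_exp_le {r p s : ℝ} (hp : 0 < p) (hp1 : p ≤ 1) (hs : 0 < s)
    (x : ℝ) :
    (1 + x ^ 2) ^ (-r) * x ^ 2 * exp (-(x ^ 2 * s) / 2)
      ≤ (2 * p) ^ p * s ^ (-p) * (1 + x ^ 2) ^ (1 - p - r) := by
  rcases eq_or_ne x 0 with rfl | hx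
  · simp only [ne_eq, OfNat.ofNat_ne_zero, not_false_eq_true, zero_pow, mul_zero, zero_mul]
    positivity
  have hx2 : 0 < x ^ 2 := by positivity
  calc (1 + x ^ 2) ^ (-r) * x ^ 2 * exp (-(x ^ 2 * s) / 2)
      ≤ (1 + x ^ 2) ^ (-r) * x ^ 2 * (p ^ p * (x ^ 2 * s / 2) ^ (-p)) := by
        rw [neg_div]
        gcongr
        exact exp_neg_le_rpow_mul_rpow_neg hp (by positivity)
    _ = (2 * p) ^ p * s ^ (-p) * ((1 + x ^ 2) ^ (-r) * (x ^ 2) ^ (1 - p)) := by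
        rw [mul_div_assoc, mul_rpow hx2.le (by positivity), div_rpow hs.le zero_le_two,
          rpow_neg zero_le_two, mul_rpow zero_le_two hp.le, sub_eq_add_neg, rpow_add hx2, rpow_one]
        field_simp
    _ ≤ (2 * p) ^ p * s ^ (-p) * ((1 + x ^ 2) ^ (-r) * (1 + x ^ 2) ^ (1 - p)) := by
        gcongr
        · linarith
    _ = (2 * p) ^ p * s ^ (-p) * (1 + x ^ 2) ^ (1 - p - r) := by
        rw [← rpow_add (by positivity)]
        ring_nf

lemma lintegral_lintegral_lintegral_lt_top_of_le_mul {α β γ : Type*} [MeasurableSpace α]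
    [MeasurableSpace β] [MeasurableSpace γ] {μ : Measure α} {ν : Measure β} {ρ : Measure γ}
    {f : α → β → γ → ENNReal} {g : α → ENNReal} {h : β → γ → ENNReal}
    (hfgh : ∀ x, ∀ᵐ u ∂ν, ∀ᵐ v ∂ρ, f x u v ≤ g x * h u v) (hg_ne_top : ∀ x, g x ≠ ⊤)
    (hg : ∫⁻ x, g x ∂μ < ⊤) (hh : ∫⁻ u, ∫⁻ v, h u v ∂ρ ∂ν < ⊤) :
    ∫⁻ x, ∫⁻ u, ∫⁻ v, f x u v ∂ρ ∂ν ∂μ < ⊤ :=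
  calc _ ≤ ∫⁻ x, ∫⁻ u, ∫⁻ v, g x * h u v ∂ρ ∂ν ∂μ :=
        lintegral_mono fun x => lintegral_mono_ae <| (hfgh x).mono fun _ hu => lintegral_mono_ae hu
    _ = (∫⁻ x, g x ∂μ) * ∫⁻ u, ∫⁻ v, h u v ∂ρ ∂ν := by
        simp_rw [lintegral_const_mul' _ _ (hg_ne_top _)]
        exact lintegral_mul_const' _ _ hh.ne
    _ < ⊤ := ENNReal.mul_lt_top hg hh

lemma offDiagonal_integrand_le {H T r p x u v : ℝ} (hH : 1 / 2 < H) (hp : 0 < p) (hp1 : p ≤ 1)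
    (hu : u ∈ Icc 0 T) (hv : v ∈ Icc 0 T) (huv : u ≠ v) :
    (1 + x ^ 2) ^ (-r) * x ^ 2 * (∫ t in (0 : ℝ)..u, |t - v| ^ (2 * H - 2)) *
        (∫ t in (0 : ℝ)..v, |u - t| ^ (2 * H - 2)) * exp (-(x ^ 2 * |u - v| ^ (2 * H)) / 2)
      ≤ (∫ w in -T..T, |w| ^ (2 * H - 2)) ^ 2 * (2 * p) ^ p * (1 + x ^ 2) ^ (1 - p - r) *
        |u - v| ^ (-(2 * H * p)) := by
  have hK : -1 < 2 * H - 2 := by linarith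
  have hs : 0 < |u - v| ^ (2 * H) := rpow_pos_of_pos (abs_pos.2 (sub_ne_zero.2 huv)) _
  have hK₁ := intervalIntegral_abs_sub_rpow_le hK hu hv
  have hK₂ : ∫ t in (0 : ℝ)..v, |u - t| ^ (2 * H - 2) ≤ ∫ w in -T..T, |w| ^ (2 * H - 2) := by
    simp_rw [abs_sub_comm u]
    exact intervalIntegral_abs_sub_rpow_le hK hv hu
  have hK₁₀ : 0 ≤ ∫ t in (0 : ℝ)..u, |t - v| ^ (2 * H - 2) :=
    intervalIntegral.integral_nonneg hu.1 fun _ _ => rpow_nonneg (abs_nonneg _) _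
  have hK₂₀ : 0 ≤ ∫ t in (0 : ℝ)..v, |u - t| ^ (2 * H - 2) :=
    intervalIntegral.integral_nonneg hv.1 fun _ _ => rpow_nonneg (abs_nonneg _) _
  calc _ = ((1 + x ^ 2) ^ (-r) * x ^ 2 * exp (-(x ^ 2 * |u - v| ^ (2 * H)) / 2)) *
        ((∫ t in (0 : ℝ)..u, |t - v| ^ (2 * H - 2)) *
          ∫ t in (0 : ℝ)..v, |u - t| ^ (2 * H - 2)) := by
        ring
    _ ≤ ((2 * p) ^ p * (|u - v| ^ (2 * H)) ^ (-p) * (1 + x ^ 2) ^ (1 - p - r)) *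
        ((∫ w in -T..T, |w| ^ (2 * H - 2)) * ∫ w in -T..T, |w| ^ (2 * H - 2)) :=
        mul_le_mul (one_add_sq_rpow_neg_mul_sq_mul_exp_le hp hp1 hs x)
          (mul_le_mul hK₁ hK₂ hK₂₀ (hK₁₀.trans hK₁)) (by positivity) (by positivity)
    _ = _ := by
        rw [← rpow_mul (abs_nonneg _)]
        ring_nf

theorem fbm_current_sobolev_offdiagonal_term_finite_general
    (H T r : ℝ) (hH : 1 / 2 < H)
    (hr : 3 / 2 - 1 / (2 * H) < r) :
    ∫⁻ x : ℝ, ∫⁻ u₁ in Set.Icc (0 : ℝ) T, ∫⁻ v₂ in Set.Icc (0 : ℝ) T,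
      ENNReal.ofReal ((1 + x ^ 2) ^ (-r) * x ^ 2 *
        (∫ u₂ in (0 : ℝ)..u₁, |u₂ - v₂| ^ (2 * H - 2)) *
        (∫ v₁ in (0 : ℝ)..v₂, |u₁ - v₁| ^ (2 * H - 2)) *
        Real.exp (-(x ^ 2 * |u₁ - v₂| ^ (2 * H)) / 2))
    < ⊤ := by
  have h2H : 0 < 2 * H := by linarith
  obtain ⟨p, hp_lo, hp_hi⟩ := exists_between
    (max_lt (by positivity : (0 : ℝ) < 1 / (2 * H)) (by linarith : 3 / 2 - r < 1 / (2 * H)))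
  have hp : 0 < p := (le_max_left _ _).trans_lt hp_lo
  have hrp : 3 / 2 - r < p := (le_max_right _ _).trans_lt hp_lo
  have hpH : 2 * H * p < 1 := by rwa [lt_div_iff₀ h2H, mul_comm] at hp_hi
  have hp1 : p ≤ 1 := by nlinarith
  refine lintegral_lintegral_lintegral_lt_top_of_le_mul
    (g := fun x => ENNReal.ofReal
      ((∫ w in -T..T, |w| ^ (2 * H - 2)) ^ 2 * (2 * p) ^ p * (1 + x ^ 2) ^ (1 - p - r)))
    (h := fun u v => ENNReal.ofReal (|u - v| ^ (-(2 * H * p)))) (fun x => ?_)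
    (fun _ => ENNReal.ofReal_ne_top)
    (((integrable_one_add_sq_rpow (by linarith)).const_mul _).lintegral_lt_top)
    (setLIntegral_Icc_setLIntegral_Icc_abs_sub_rpow_lt_top (by linarith) T)
  filter_upwards [ae_restrict_mem measurableSet_Icc] with u hu
  filter_upwards [ae_restrict_mem measurableSet_Icc, ae_restrict_of_ae (Measure.ae_ne volume u)]
    with v hv hvu
  rw [← ENNReal.ofReal_mul (by positivity)]
  exact ENNReal.ofReal_le_ofReal (offDiagonal_integrand_le hH hp hp1 hu hv hvu.symm)

/-- for `H ∈ (1/2,1)`, `T > 0` and `r > 3/2 − 1/(2H)`,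
`∫_ℝ (1+x²)^{−r} x² ( ∫_0^T ∫_0^T ( ∫_0^{u₁} |u₂−v₂|^{2H−2} du₂ )
( ∫_0^{v₂} |u₁−v₁|^{2H−2} dv₁ ) e^{−x²|u₁−v₂|^{2H}/2} du₁ dv₂ ) dx < ∞`. -/
theorem fbm_current_sobolev_offdiagonal_term_finite
    (H T r : ℝ) (hH : 1 / 2 < H) (hH1 : H < 1) (hT : 0 < T)
    (hr : 3 / 2 - 1 / (2 * H) < r) :
    ∫⁻ x : ℝ, ∫⁻ u₁ in Set.Icc (0 : ℝ) T, ∫⁻ v₂ in Set.Icc (0 : ℝ) T,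
      ENNReal.ofReal ((1 + x ^ 2) ^ (-r) * x ^ 2 *
        (∫ u₂ in (0 : ℝ)..u₁, |u₂ - v₂| ^ (2 * H - 2)) *
        (∫ v₁ in (0 : ℝ)..v₂, |u₁ - v₁| ^ (2 * H - 2)) *
        Real.exp (-(x ^ 2 * |u₁ - v₂| ^ (2 * H)) / 2))
    < ⊤ :=
  fbm_current_sobolev_offdiagonal_term_finite_general H T r hH hr
end
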